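/- Let B₁, B₂, B₃, C, D : ℝ³ × ℝ → ℝ be continuous functions and for each point p = (y,t,r) ∈ ℝ³ × ℝ × ℝ define the symmetric bilinear form g_p on ℝ³ × ℝ × ℝ by g_p( (ẏ,ṫ,ṙ), (ẏ',ṫ',ṙ') ) = ⟨ẏ,ẏ'⟩ + Σ_{k=1}^{3} B_k(y,t)·( ẏ_k·ṙ' + ṙ·ẏ'_k ) + C(y,t)·ṙ·ṙ' + D(y,t)·( ṫ·ṙ' + ṙ·ṫ' ). For v, w ∈ ℝ³ and t₀ ∈ ℝ define Φ_{v,w,t₀}(y,t,r) = ( y + (t+t₀)v + w, t + t₀, r − ⟨v,y⟩ − (t/2)‖v‖² ) and the linear map L_v(ẏ,ṫ,ṙ) = ( ẏ + ṫ·v, ṫ, ṙ − ⟨v,ẏ⟩ − (ṫ/2)‖v‖² ). Suppose that for all v, w ∈ ℝ³, t₀ ∈ ℝ, all points p and all vectors u, u': g_{Φ_{v,w,t₀}(p)}( L_v u, L_v u' ) = g_p( u, u' ). Then B_k ≡ 0 for k = 1,2,3, C ≡ 0, and D ≡ 1; that is, g is the Schrödinger metric Σ_k dy_k⊗dy_k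 + dt⊗dr + dr⊗dt, which is therefore the unique metric of this form, extending the standard spatial Euclidean metric, that is invariant under all changes of inertial frame. -/

import Mathlib

open scoped BigOperators

/-- The general `U(1)`-invariant (`r`-independent) metric extending the spatial
Euclidean metric:
`g_p(u,u') = ⟨ẏ,ẏ'⟩ + Σ_k B_k(y,t)(ẏ_kṙ' + ṙẏ'_k) + C(y,t)ṙṙ' + D(y,t)(ṫṙ' + ṙṫ')`. -/
noncomputable def gMetric (B : Fin 3 → (Fin 3 → ℝ) × ℝ → ℝ)
    (C D : (Fin 3 → ℝ) × ℝ → ℝ)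
    (p : (Fin 3 → ℝ) × ℝ × ℝ) (u u' : (Fin 3 → ℝ) × ℝ × ℝ) : ℝ :=
  (∑ k : Fin 3, u.1 k * u'.1 k)
    + (∑ k : Fin 3, B k (p.1, p.2.1) * (u.1 k * u'.2.2 + u.2.2 * u'.1 k))
    + C (p.1, p.2.1) * (u.2.2 * u'.2.2)
    + D (p.1, p.2.1) * (u.2.1 * u'.2.2 + u.2.2 * u'.2.1)

/-- The coordinate change `Φ_{v,w,t₀}(y,t,r) = (y + (t+t₀)v + w, t+t₀, r − ⟨v,y⟩ − (t/2)‖v‖²)`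
on the Schrödinger principal bundle associated with a change of inertial frame. -/
noncomputable def PhiMap (v w : Fin 3 → ℝ) (t0 : ℝ)
    (p : (Fin 3 → ℝ) × ℝ × ℝ) : (Fin 3 → ℝ) × ℝ × ℝ :=
  (p.1 + (p.2.1 + t0) • v + w, p.2.1 + t0,
    p.2.2 - (∑ k : Fin 3, v k * p.1 k) - (p.2.1 / 2) * ∑ k : Fin 3, v k * v k)

/-- The differential `L_v(ẏ,ṫ,ṙ) = (ẏ + ṫ·v, ṫ, ṙ − ⟨v,ẏ⟩ − (ṫ/2)‖v‖²)` of `Φ_{v,w,t₀}`. -/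
noncomputable def Lv (v : Fin 3 → ℝ) (u : (Fin 3 → ℝ) × ℝ × ℝ) : (Fin 3 → ℝ) × ℝ × ℝ :=
  (u.1 + u.2.1 • v, u.2.1,
    u.2.2 - (∑ k : Fin 3, v k * u.1 k) - (u.2.1 / 2) * ∑ k : Fin 3, v k * v k)

/-!
At the origin every boost `Φ_{v,0,0}` is a fixed point, so invariance of
`g_0(∂_t, ∂_r) = D` under `L_v`, which fixes `∂_r` and sends `∂_t` to `(v, 1, -‖v‖²/2)`, gives
`⟨B, v⟩ - C ‖v‖² / 2 = 0` for every `v`; comparing `v` with `-v` forces `B = 0` and `C = 0`.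
Then invariance of `g_0(∂_t, ∂_t) = 0` forces `D = 1`. Finally the pure translations
`Φ_{0,w,t₀}` have `L_0 = id`, so the coefficients take their values at the origin everywhere.
-/

theorem eq_zero_of_dotProduct_eq_mul_self {ι : Type*} [Fintype ι] [Nonempty ι]
    {b : ι → ℝ} {c : ℝ} (h : ∀ v, b ⬝ᵥ v = c * (v ⬝ᵥ v)) : b = 0 ∧ c = 0 := by
  classical
  have hb : ∀ v, b ⬝ᵥ v = 0 := fun v => by
    have hneg := h (-v)
    rw [dotProduct_neg, neg_dotProduct, dotProduct_neg, neg_neg] at hneg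
    linarith [h v]
  have hb0 : b = 0 := funext fun i => by simpa using hb (Pi.single i 1)
  refine ⟨hb0, ?_⟩
  obtain ⟨i⟩ := ‹Nonempty ι›
  simpa [hb0] using (h (Pi.single i 1)).symm

section Formulas

variable (B : Fin 3 → (Fin 3 → ℝ) × ℝ → ℝ) (C D : (Fin 3 → ℝ) × ℝ → ℝ)

theorem gMetric_apply_dr (p u : (Fin 3 → ℝ) × ℝ × ℝ) :
    gMetric B C D p u (0, 0, 1) =
      (fun k => B k (p.1, p.2.1)) ⬝ᵥ u.1 + C (p.1, p.2.1) * u.2.2 + D (p.1, p.2.1) * u.2.1 := by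
  simp [gMetric, dotProduct]

theorem gMetric_self (p u : (Fin 3 → ℝ) × ℝ × ℝ) :
    gMetric B C D p u u = u.1 ⬝ᵥ u.1 + 2 * u.2.2 * ((fun k => B k (p.1, p.2.1)) ⬝ᵥ u.1)
      + C (p.1, p.2.1) * u.2.2 ^ 2 + 2 * D (p.1, p.2.1) * u.2.1 * u.2.2 := by
  simp only [gMetric, dotProduct, Fin.sum_univ_three]
  ring

end Formulas

theorem PhiMap_zero_zero_zero (v : Fin 3 → ℝ) : PhiMap v 0 0 0 = 0 := by
  simp [PhiMap]

theorem PhiMap_zero_left (w : Fin 3 → ℝ) (t0 : ℝ) (p : (Fin 3 → ℝ) × ℝ × ℝ) :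
    PhiMap 0 w t0 p = (p.1 + w, p.2.1 + t0, p.2.2) := by
  simp [PhiMap]

theorem Lv_zero (u : (Fin 3 → ℝ) × ℝ × ℝ) : Lv 0 u = u := by
  simp [Lv]

theorem Lv_dr (v : Fin 3 → ℝ) : Lv v (0, 0, 1) = (0, 0, 1) := by
  simp [Lv]

theorem Lv_dt (v : Fin 3 → ℝ) : Lv v (0, 1, 0) = (v, 1, -(v ⬝ᵥ v) / 2) := by
  simp [Lv, dotProduct]
  ring

def IsFrameInvariant (B : Fin 3 → (Fin 3 → ℝ) × ℝ → ℝ) (C D : (Fin 3 → ℝ) × ℝ → ℝ) : Prop :=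
  ∀ (v w : Fin 3 → ℝ) (t0 : ℝ) (p : (Fin 3 → ℝ) × ℝ × ℝ) (u u' : (Fin 3 → ℝ) × ℝ × ℝ),
    gMetric B C D (PhiMap v w t0 p) (Lv v u) (Lv v u') = gMetric B C D p u u'

namespace IsFrameInvariant

variable {B : Fin 3 → (Fin 3 → ℝ) × ℝ → ℝ} {C D : (Fin 3 → ℝ) × ℝ → ℝ}

theorem gMetric_eq_origin (h : IsFrameInvariant B C D) (q : (Fin 3 → ℝ) × ℝ)
    (u u' : (Fin 3 → ℝ) × ℝ × ℝ) : gMetric B C D (q.1, q.2, 0) u u' = gMetric B C D 0 u u' := by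
  simpa [PhiMap_zero_left, Lv_zero] using h 0 q.1 q.2 0 u u'

theorem coeff_eq_origin (h : IsFrameInvariant B C D) (q : (Fin 3 → ℝ) × ℝ) :
    (∀ k, B k q = B k 0) ∧ C q = C 0 ∧ D q = D 0 := by
  have hdr := fun u => h.gMetric_eq_origin q u (0, 0, 1)
  simp only [gMetric_apply_dr] at hdr
  refine ⟨fun k => ?_, ?_, ?_⟩
  · simpa [Prod.mk_zero_zero] using hdr (Pi.single k 1, 0, 0)
  · simpa [Prod.mk_zero_zero] using hdr (0, 0, 1)
  · simpa [Prod.mk_zero_zero] using hdr (0, 1, 0)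

theorem B_dotProduct_origin (h : IsFrameInvariant B C D) (v : Fin 3 → ℝ) :
    (fun k => B k 0) ⬝ᵥ v = C 0 / 2 * (v ⬝ᵥ v) := by
  have hv := h v 0 0 0 (0, 1, 0) (0, 0, 1)
  rw [PhiMap_zero_zero_zero, Lv_dt, Lv_dr, gMetric_apply_dr, gMetric_apply_dr] at hv
  simp only [Prod.fst_zero, Prod.snd_zero, Prod.mk_zero_zero, dotProduct_zero] at hv
  linear_combination hv

theorem coeff_origin (h : IsFrameInvariant B C D) :
    (∀ k, B k 0 = 0) ∧ C 0 = 0 ∧ D 0 = 1 := by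
  obtain ⟨hB, hC⟩ := eq_zero_of_dotProduct_eq_mul_self h.B_dotProduct_origin
  have hC0 : C 0 = 0 := by linarith
  refine ⟨fun k => congrFun hB k, hC0, ?_⟩
  have hv := h (Pi.single 0 1) 0 0 0 (0, 1, 0) (0, 1, 0)
  rw [PhiMap_zero_zero_zero, Lv_dt, gMetric_self, gMetric_self] at hv
  simp only [Prod.fst_zero, Prod.snd_zero, Prod.mk_zero_zero, dotProduct_single,
    Pi.single_eq_same, dotProduct_zero, hB, hC0, Pi.zero_apply] at hv
  linear_combination -hv

end IsFrameInvariant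

theorem schrodinger_metric_unique_general
    (B : Fin 3 → (Fin 3 → ℝ) × ℝ → ℝ) (C D : (Fin 3 → ℝ) × ℝ → ℝ)
    (hinv : ∀ (v w : Fin 3 → ℝ) (t0 : ℝ) (p : (Fin 3 → ℝ) × ℝ × ℝ)
      (u u' : (Fin 3 → ℝ) × ℝ × ℝ),
      gMetric B C D (PhiMap v w t0 p) (Lv v u) (Lv v u') = gMetric B C D p u u') :
    (∀ (k : Fin 3) (q : (Fin 3 → ℝ) × ℝ), B k q = 0)
    ∧ (∀ q : (Fin 3 → ℝ) × ℝ, C q = 0)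
    ∧ (∀ q : (Fin 3 → ℝ) × ℝ, D q = 1) := by
  have h : IsFrameInvariant B C D := hinv
  obtain ⟨hB0, hC0, hD0⟩ := h.coeff_origin
  refine ⟨fun k q => ?_, fun q => ?_, fun q => ?_⟩
  · rw [(h.coeff_eq_origin q).1 k, hB0 k]
  · rw [(h.coeff_eq_origin q).2.1, hC0]
  · rw [(h.coeff_eq_origin q).2.2, hD0]

/-- Uniqueness of the Schrödinger metric: if the metric `g` (extending the standard
spatial Euclidean metric, with continuous coefficients `B_k`, `C`, `D`) is invariant
under all changes of inertial frame, then `B_k ≡ 0`, `C ≡ 0` and `D ≡ 1`, i.e. `g` is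
the Schrödinger metric `Σ_k dy_k⊗dy_k + dt⊗dr + dr⊗dt`. -/
theorem schrodinger_metric_unique
    (B : Fin 3 → (Fin 3 → ℝ) × ℝ → ℝ) (C D : (Fin 3 → ℝ) × ℝ → ℝ)
    (hB : ∀ k : Fin 3, Continuous (B k)) (hC : Continuous C) (hD : Continuous D)
    (hinv : ∀ (v w : Fin 3 → ℝ) (t0 : ℝ) (p : (Fin 3 → ℝ) × ℝ × ℝ)
      (u u' : (Fin 3 → ℝ) × ℝ × ℝ),
      gMetric B C D (PhiMap v w t0 p) (Lv v u) (Lv v u') = gMetric B C D p u u') :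
    (∀ (k : Fin 3) (q : (Fin 3 → ℝ) × ℝ), B k q = 0)
    ∧ (∀ q : (Fin 3 → ℝ) × ℝ, C q = 0)
    ∧ (∀ q : (Fin 3 → ℝ) × ℝ, D q = 1) :=
  schrodinger_metric_unique_general B C D hinv
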